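/- arXiv:1809.06224 — 2 statements merged into one kernel-verified Lean document; each statement's English description precedes it below -/
import Mathlib

section
/- Let n ≥ 2 and let Σ = {γ_{i,j} : 1 ≤ i ≠ j ≤ n} be the root system of sl(n,ℂ), where γ_{i,j} = e_i* − e_j* on the diagonal Cartan subalgebra. Suppose S ⊆ Σ is closed under addition (i.e., if χ₁, χ₂ ∈ S and χ₁ + χ₂ ∈ Σ then χ₁ + χ₂ ∈ S) and |Σ \ S| < 2n − 2. Then for every pair i ≠ j, either γ_{i,j} ∈ S or γ_{j,i} ∈ S. -/
/-!
Suppose neither γ_{i,j} nor γ_{j,i} lies in S. For every k ≠ j, one of the pairs (i,k), (k,j)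
is a root outside S: for k = i it is γ_{i,j} itself, otherwise closedness of S forces it.
Likewise for every k ≠ i one of (j,k), (k,i) is. These 2n - 2 pairs of pairs are pairwise
disjoint, so Σ \ S has at least 2n - 2 elements.
-/

open Finset

namespace SLRoots

variable {α : Type*} [DecidableEq α]

def IsAddClosed (S : Finset (α × α)) : Prop :=
  ∀ i k j : α, i ≠ j → (i, k) ∈ S → (k, j) ∈ S → (i, j) ∈ S

def summandPair (i j k : α) : Finset (α × α) := {(i, k), (k, j)}

lemma disjoint_summandPair {i j k k' : α} (hk : k ≠ j) (hk' : k' ≠ j) (hkk' : k ≠ k') :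
    Disjoint (summandPair i j k) (summandPair i j k') := by
  simp only [summandPair, disjoint_left, mem_insert, mem_singleton]
  grind

lemma disjoint_summandPair_swap {i j k k' : α} (hij : i ≠ j) (hk : k ≠ j) (hk' : k' ≠ i) :
    Disjoint (summandPair i j k) (summandPair j i k') := by
  simp only [summandPair, disjoint_left, mem_insert, mem_singleton]
  grind

variable [Fintype α]

def summands (i j : α) : Finset (α × α) := (univ.erase j).biUnion (summandPair i j)

lemma disjoint_summands {i j : α} (hij : i ≠ j) : Disjoint (summands i j) (summands j i) := by
  simp only [summands, disjoint_biUnion_left, disjoint_biUnion_right, mem_erase]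
  exact fun k' hk' k hk => disjoint_summandPair_swap hij hk.1 hk'.1

def missingRoots (S : Finset (α × α)) : Finset (α × α) :=
  univ.filter (fun p : α × α => p.1 ≠ p.2) \ S

lemma summandPair_inter_missingRoots_nonempty {S : Finset (α × α)} (hS : IsAddClosed S)
    {i j k : α} (hij : i ≠ j) (hS_ij : (i, j) ∉ S) (hk : k ≠ j) :
    (summandPair i j k ∩ missingRoots S).Nonempty := by
  by_cases hkj : (k, j) ∈ S
  · have hik : i ≠ k := by rintro rfl; exact hS_ij hkj
    have hik_S : (i, k) ∉ S := fun h => hS_ij (hS i k j hij h hkj)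
    exact ⟨(i, k), by simp [summandPair, missingRoots, hik, hik_S]⟩
  · exact ⟨(k, j), by simp [summandPair, missingRoots, hk, hkj]⟩

lemma card_sub_one_le_card_summands_inter_missingRoots {S : Finset (α × α)}
    (hS : IsAddClosed S) {i j : α} (hij : i ≠ j) (hS_ij : (i, j) ∉ S) :
    Fintype.card α - 1 ≤ #(summands i j ∩ missingRoots S) := by
  rw [summands, biUnion_inter, ← card_univ, ← card_erase_of_mem (mem_univ j)]
  refine card_le_card_biUnion ?_ fun k hk => ?_
  · intro k hk k' hk' hkk'
    exact (disjoint_summandPair (ne_of_mem_erase hk) (ne_of_mem_erase hk') hkk').mono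
      inf_le_left inf_le_left
  · exact summandPair_inter_missingRoots_nonempty hS hij hS_ij (ne_of_mem_erase hk)

theorem two_mul_card_sub_one_le_card_missingRoots {S : Finset (α × α)} (hS : IsAddClosed S)
    {i j : α} (hij : i ≠ j) (hS_ij : (i, j) ∉ S) (hS_ji : (j, i) ∉ S) :
    2 * (Fintype.card α - 1) ≤ #(missingRoots S) := by
  have hij_card := card_sub_one_le_card_summands_inter_missingRoots hS hij hS_ij
  have hji_card := card_sub_one_le_card_summands_inter_missingRoots hS hij.symm hS_ji
  calc 2 * (Fintype.card α - 1)
      ≤ #(summands i j ∩ missingRoots S) + #(summands j i ∩ missingRoots S) := by omega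
    _ = #(summands i j ∩ missingRoots S ∪ summands j i ∩ missingRoots S) :=
        (card_union_of_disjoint ((disjoint_summands hij).mono inf_le_left inf_le_left)).symm
    _ ≤ #(missingRoots S) := card_le_card (union_subset inter_subset_right inter_subset_right)

end SLRoots

theorem stmt0_general (n : ℕ)
    (S : Finset (Fin n × Fin n))
    (hclosed : ∀ i k j : Fin n, i ≠ j → (i, k) ∈ S → (k, j) ∈ S → (i, j) ∈ S)
    (hcard : ((Finset.univ.filter (fun p : Fin n × Fin n => p.1 ≠ p.2)) \ S).card
        < 2 * n - 2) :
    ∀ i j : Fin n, i ≠ j → (i, j) ∈ S ∨ (j, i) ∈ S := by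
  intro i j hij
  by_contra! h
  have hbound := SLRoots.two_mul_card_sub_one_le_card_missingRoots hclosed hij h.1 h.2
  simp only [SLRoots.missingRoots, Fintype.card_fin] at hbound
  omega

/-- Roots of sl(n,ℂ) as ordered pairs (i,j), i ≠ j. If S ⊆ Σ is closed under
root addition and |Σ \ S| < 2n - 2, then for every i ≠ j, (i,j) ∈ S or (j,i) ∈ S. -/
theorem stmt0 (n : ℕ) (hn : 2 ≤ n)
    (S : Finset (Fin n × Fin n))
    (hSsub : S ⊆ (Finset.univ.filter (fun p : Fin n × Fin n => p.1 ≠ p.2)))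
    (hclosed : ∀ i k j : Fin n, i ≠ j → (i, k) ∈ S → (k, j) ∈ S → (i, j) ∈ S)
    (hcard : ((Finset.univ.filter (fun p : Fin n × Fin n => p.1 ≠ p.2)) \ S).card
        < 2 * n - 2) :
    ∀ i j : Fin n, i ≠ j → (i, j) ∈ S ∨ (j, i) ∈ S :=
  stmt0_general n S hclosed hcard
end

section
/- Let n ≥ 2, i ≠ j in [n], and S ⊆ Σ = {(u,v) : u ≠ v} be closed under root addition. If |Σ \ S| < 2n−2, then at least one of the 2n−2 pairwise disjoint sets {(i,j)}, {(j,i)}, {(i,k),(k,j)}, {(j,k),(k,i)} (k ∉ {i,j}) is entirely contained in S; in each case one deduces (i,j) ∈ S or (j,i) ∈ S. -/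
/-! The 2n−2 sets of `rootFam` are pairwise disjoint sets of roots, so if each of them missed
`S`, the complement of `S` would contain 2n−2 distinct roots. A set contained in `S` gives
(i,j) or (j,i) either directly or after one application of closedness. -/

/-- The family of 2n-2 subsets of the root system: for fixed i ≠ j, the sets
{(i,j)}, {(j,i)}, and for each k ∉ {i,j}, {(i,k),(k,j)} and {(j,k),(k,i)}. -/
def rootFam (n : ℕ) (i j : Fin n) :
    Unit ⊕ Unit ⊕ {k : Fin n // k ≠ i ∧ k ≠ j} ⊕ {k : Fin n // k ≠ i ∧ k ≠ j} →
      Finset (Fin n × Fin n)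
  | Sum.inl _ => {(i, j)}
  | Sum.inr (Sum.inl _) => {(j, i)}
  | Sum.inr (Sum.inr (Sum.inl k)) => {(i, k.1), (k.1, j)}
  | Sum.inr (Sum.inr (Sum.inr k)) => {(j, k.1), (k.1, i)}

open Function

theorem Finset.exists_subset_of_card_sdiff_lt {α ι : Type*} [DecidableEq α] [Fintype ι]
    {t : ι → Finset α} {U S : Finset α} (hdisj : Pairwise (Disjoint on t))
    (htU : ∀ a, t a ⊆ U) (hcard : (U \ S).card < Fintype.card ι) : ∃ a, t a ⊆ S := by
  by_contra! h
  choose f hft hfS using fun a => Finset.not_subset.mp (h a)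
  have hinj : Function.Injective f := fun a b hab =>
    hdisj.eq (Finset.not_disjoint_iff.mpr ⟨f a, hft a, hab ▸ hft b⟩)
  have hmaps : ∀ a ∈ (Finset.univ : Finset ι), f a ∈ U \ S := fun a _ =>
    Finset.mem_sdiff.mpr ⟨htU a (hft a), hfS a⟩
  have := Finset.card_le_card_of_injOn f hmaps hinj.injOn
  rw [Finset.card_univ] at this
  omega

section rootFam

variable {n : ℕ} {i j : Fin n}

theorem rootFam_subset_offDiag (hij : i ≠ j) (a) :
    rootFam n i j a ⊆ Finset.univ.filter (fun p : Fin n × Fin n => p.1 ≠ p.2) := by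
  intro p hp
  rcases a with _ | _ | ⟨k, hki, hkj⟩ | ⟨k, hki, hkj⟩ <;>
    simp only [rootFam, Finset.mem_singleton, Finset.mem_insert] at hp <;>
    aesop

theorem rootFam_pairwise_disjoint (hij : i ≠ j) : Pairwise (Disjoint on (rootFam n i j)) := by
  intro a b hab
  rw [Function.onFun, Finset.disjoint_left]
  intro p ha hb
  apply hab
  rcases a with _ | _ | ⟨k, hki, hkj⟩ | ⟨k, hki, hkj⟩ <;>
    rcases b with _ | _ | ⟨l, hli, hlj⟩ | ⟨l, hli, hlj⟩ <;>
    simp only [rootFam, Finset.mem_singleton, Finset.mem_insert] at ha hb <;>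
    aesop

theorem card_rootFam_index (hij : i ≠ j) :
    Fintype.card (Unit ⊕ Unit ⊕ {k : Fin n // k ≠ i ∧ k ≠ j} ⊕ {k : Fin n // k ≠ i ∧ k ≠ j})
      = 2 * n - 2 := by
  have hpair : ({i, j} : Finset (Fin n)).card = 2 := Finset.card_pair hij
  have hle : ({i, j} : Finset (Fin n)).card ≤ n := by simpa using Finset.card_le_univ {i, j}
  have hrest : Fintype.card {k : Fin n // k ≠ i ∧ k ≠ j} = n - 2 := by
    have hcompl : Finset.univ.filter (fun k : Fin n => k ≠ i ∧ k ≠ j) = {i, j}ᶜ := by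
      ext k
      simp
    rw [Fintype.card_subtype, hcompl, Finset.card_compl, Fintype.card_fin, hpair]
  simp only [Fintype.card_sum, Fintype.card_unit, hrest]
  omega

theorem mem_or_mem_of_rootFam_subset (hij : i ≠ j) {S : Finset (Fin n × Fin n)}
    (hclosed : ∀ u k v : Fin n, u ≠ v → (u, k) ∈ S → (k, v) ∈ S → (u, v) ∈ S)
    {a} (ha : rootFam n i j a ⊆ S) : (i, j) ∈ S ∨ (j, i) ∈ S := by
  rcases a with _ | _ | ⟨k, _⟩ | ⟨k, _⟩
  · exact Or.inl (ha (by simp [rootFam]))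
  · exact Or.inr (ha (by simp [rootFam]))
  · exact Or.inl (hclosed i k j hij (ha (by simp [rootFam])) (ha (by simp [rootFam])))
  · exact Or.inr (hclosed j k i hij.symm (ha (by simp [rootFam])) (ha (by simp [rootFam])))

end rootFam

theorem stmt2_general (n : ℕ) (i j : Fin n) (hij : i ≠ j)
    (S : Finset (Fin n × Fin n))
    (hclosed : ∀ u k v : Fin n, u ≠ v → (u, k) ∈ S → (k, v) ∈ S → (u, v) ∈ S)
    (hcard : ((Finset.univ.filter (fun p : Fin n × Fin n => p.1 ≠ p.2)) \ S).card
        < 2 * n - 2) :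
    (∃ a, rootFam n i j a ⊆ S) ∧ ((i, j) ∈ S ∨ (j, i) ∈ S) := by
  obtain ⟨a, ha⟩ := Finset.exists_subset_of_card_sdiff_lt (rootFam_pairwise_disjoint hij)
    (rootFam_subset_offDiag hij) (hcard.trans_eq (card_rootFam_index hij).symm)
  exact ⟨⟨a, ha⟩, mem_or_mem_of_rootFam_subset hij hclosed ha⟩

/-- If S is closed under root addition and |Σ \ S| < 2n - 2, then one of the
2n-2 pairwise disjoint sets is entirely contained in S, and in each case one
deduces (i,j) ∈ S or (j,i) ∈ S. -/
theorem stmt2 (n : ℕ) (hn : 2 ≤ n) (i j : Fin n) (hij : i ≠ j)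
    (S : Finset (Fin n × Fin n))
    (hSsub : S ⊆ (Finset.univ.filter (fun p : Fin n × Fin n => p.1 ≠ p.2)))
    (hclosed : ∀ u k v : Fin n, u ≠ v → (u, k) ∈ S → (k, v) ∈ S → (u, v) ∈ S)
    (hcard : ((Finset.univ.filter (fun p : Fin n × Fin n => p.1 ≠ p.2)) \ S).card
        < 2 * n - 2) :
    (∃ a, rootFam n i j a ⊆ S) ∧ ((i, j) ∈ S ∨ (j, i) ∈ S) :=
  stmt2_general n i j hij S hclosed hcard
end
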